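/- Noninterference for a simple while-free command language with tagged memories: if a command C is well-typed under a program counter pc and type environment Γ (mapping variables to rights), and M₁, M₂ are memories equivalent on low variables (variables x with Γ(x) low), then running C to termination from M₁ and from M₂ yields memories that are again equivalent on low variables. -/

import Mathlib

/-- Integer expressions: literals, variables, and `+`. -/
inductive AExp : Type
  | lit (n : ℤ)
  | var (x : ℕ)
  | add (a b : AExp)

/-- Evaluation of expressions over total integer memories. -/
def evalE (M : ℕ → ℤ) : AExp → ℤ
  | .lit n => n
  | .var x => M x
  | .add a b => evalE M a + evalE M b

/-- Security levels: `false` = low, `true` = high (`low ⊑ high`). -/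
abbrev Lvl := Bool

/-- The level of an expression under `Γ`: high iff some variable is high. -/
def levelOf (Γ : ℕ → Lvl) : AExp → Lvl
  | .lit _ => false
  | .var x => Γ x
  | .add a b => levelOf Γ a || levelOf Γ b

/-- While-free commands: skip, sequencing, assignment, equality conditional. -/
inductive Cmd : Type
  | skip
  | seq (c₁ c₂ : Cmd)
  | assign (x : ℕ) (e : AExp)
  | ite (e₁ e₂ : AExp) (c₁ c₂ : Cmd)

/-- The security type system. -/
inductive WT (Γ : ℕ → Lvl) : Lvl → Cmd → Prop
  | skip {pc} : WT Γ pc .skip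
  | seq {pc c₁ c₂} : WT Γ pc c₁ → WT Γ pc c₂ → WT Γ pc (.seq c₁ c₂)
  | assign {pc x e} : (levelOf Γ e || pc) ≤ Γ x → WT Γ pc (.assign x e)
  | ite {pc e₁ e₂ c₁ c₂} :
      WT Γ (pc || levelOf Γ e₁ || levelOf Γ e₂) c₁ →
      WT Γ (pc || levelOf Γ e₁ || levelOf Γ e₂) c₂ →
      WT Γ pc (.ite e₁ e₂ c₁ c₂)

/-- Standard big-step semantics over integer memories. -/
inductive BigStep : Cmd → (ℕ → ℤ) → (ℕ → ℤ) → Prop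
  | skip {M} : BigStep .skip M M
  | seq {c₁ c₂ M M' M''} :
      BigStep c₁ M M' → BigStep c₂ M' M'' → BigStep (.seq c₁ c₂) M M''
  | assign {x e M} : BigStep (.assign x e) M (Function.update M x (evalE M e))
  | iteTrue {e₁ e₂ c₁ c₂ M M'} :
      evalE M e₁ = evalE M e₂ → BigStep c₁ M M' →
      BigStep (.ite e₁ e₂ c₁ c₂) M M'
  | iteFalse {e₁ e₂ c₁ c₂ M M'} :
      evalE M e₁ ≠ evalE M e₂ → BigStep c₂ M M' →
      BigStep (.ite e₁ e₂ c₁ c₂) M M'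

/-- Low-equivalence of memories under `Γ`. -/
def LowEq (Γ : ℕ → Lvl) (M₁ M₂ : ℕ → ℤ) : Prop :=
  ∀ x, Γ x = false → M₁ x = M₂ x

/-!
A command typed under a high program counter only writes high variables, so it leaves the low
part of the memory unchanged (confinement). Noninterference is then proved for every program
counter by induction on the typing derivation: assignments to low variables read only low
variables; a conditional whose guard is low sends both runs into the same branch; and a
conditional whose guard is high has high-typed branches, so by confinement neither run changes
the low part of its memory.
-/

theorem LowEq.refl (Γ : ℕ → Lvl) (M : ℕ → ℤ) : LowEq Γ M M :=
  fun _ _ => rfl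

theorem LowEq.symm {Γ : ℕ → Lvl} {M₁ M₂ : ℕ → ℤ} (h : LowEq Γ M₁ M₂) : LowEq Γ M₂ M₁ :=
  fun x hx => (h x hx).symm

theorem LowEq.trans {Γ : ℕ → Lvl} {M₁ M₂ M₃ : ℕ → ℤ} (h₁₂ : LowEq Γ M₁ M₂)
    (h₂₃ : LowEq Γ M₂ M₃) : LowEq Γ M₁ M₃ :=
  fun x hx => (h₁₂ x hx).trans (h₂₃ x hx)

theorem LowEq.update {Γ : ℕ → Lvl} {M₁ M₂ : ℕ → ℤ} (h : LowEq Γ M₁ M₂) (x : ℕ) {v₁ v₂ : ℤ}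
    (hv : Γ x = false → v₁ = v₂) :
    LowEq Γ (Function.update M₁ x v₁) (Function.update M₂ x v₂) := by
  intro y hy
  rcases eq_or_ne y x with rfl | hne
  · simpa using hv hy
  · rw [Function.update_of_ne hne, Function.update_of_ne hne]
    exact h y hy

theorem lowEq_update_of_high {Γ : ℕ → Lvl} (M : ℕ → ℤ) {x : ℕ} (hx : Γ x = true) (v : ℤ) :
    LowEq Γ M (Function.update M x v) := by
  intro y hy
  have hne : y ≠ x := by rintro rfl; simp [hx] at hy
  rw [Function.update_of_ne hne]

theorem evalE_eq_of_lowEq {Γ : ℕ → Lvl} {M₁ M₂ : ℕ → ℤ} (h : LowEq Γ M₁ M₂) {e : AExp}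
    (he : levelOf Γ e = false) : evalE M₁ e = evalE M₂ e := by
  induction e with
  | lit n => rfl
  | var x => exact h x he
  | add a b iha ihb =>
    simp only [levelOf, Bool.or_eq_false_iff] at he
    simp only [evalE, iha he.1, ihb he.2]

theorem BigStep.lowEq_of_wt_true {Γ : ℕ → Lvl} {C : Cmd} {M M' : ℕ → ℤ} (h : BigStep C M M')
    (hwt : WT Γ true C) : LowEq Γ M M' := by
  induction h with
  | skip => exact LowEq.refl Γ _
  | seq _ _ ih₁ ih₂ =>
    cases hwt with
    | seq w₁ w₂ => exact (ih₁ w₁).trans (ih₂ w₂)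
  | assign =>
    cases hwt with
    | assign hle => exact lowEq_update_of_high _ (hle (Bool.or_true _)) _
  -- the branches are typed under `true || _ || _`, which reduces to `true`
  | iteTrue _ _ ih =>
    cases hwt with
    | ite w₁ _ => exact ih w₁
  | iteFalse _ _ ih =>
    cases hwt with
    | ite _ w₂ => exact ih w₂

theorem WT.lowEq_of_bigStep {Γ : ℕ → Lvl} {pc : Lvl} {C : Cmd} (hwt : WT Γ pc C)
    {M₁ M₂ M₁' M₂' : ℕ → ℤ} (hlow : LowEq Γ M₁ M₂)
    (h₁ : BigStep C M₁ M₁') (h₂ : BigStep C M₂ M₂') : LowEq Γ M₁' M₂' := by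
  induction hwt generalizing M₁ M₂ M₁' M₂' with
  | skip =>
    cases h₁; cases h₂; exact hlow
  | seq _ _ ih₁ ih₂ =>
    cases h₁ with
    | seq a₁ a₂ =>
      cases h₂ with
      | seq b₁ b₂ => exact ih₂ (ih₁ hlow a₁ b₁) a₂ b₂
  | @assign pc x e hle =>
    cases h₁; cases h₂
    refine hlow.update x fun hx => evalE_eq_of_lowEq hlow ?_
    exact (Bool.or_eq_false_iff.mp (Bool.eq_false_of_le_false (hx ▸ hle))).1
  | @ite pc e₁ e₂ c₁ c₂ w₁ w₂ ih₁ ih₂ =>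
    cases hb : (pc || levelOf Γ e₁ || levelOf Γ e₂)
    · simp only [Bool.or_eq_false_iff] at hb
      have hguard : evalE M₁ e₁ = evalE M₁ e₂ ↔ evalE M₂ e₁ = evalE M₂ e₂ := by
        rw [evalE_eq_of_lowEq hlow hb.1.2, evalE_eq_of_lowEq hlow hb.2]
      cases h₁ with
      | iteTrue t₁ a =>
        cases h₂ with
        | iteTrue _ b => exact ih₁ hlow a b
        | iteFalse t₂ _ => exact absurd (hguard.mp t₁) t₂
      | iteFalse t₁ a =>
        cases h₂ with
        | iteTrue t₂ _ => exact absurd (hguard.mpr t₂) t₁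
        | iteFalse _ b => exact ih₂ hlow a b
    · rw [hb] at w₁ w₂
      have confined : ∀ {M M'}, BigStep (.ite e₁ e₂ c₁ c₂) M M' → LowEq Γ M M' := by
        intro M M' h
        cases h with
        | iteTrue _ hc => exact hc.lowEq_of_wt_true w₁
        | iteFalse _ hc => exact hc.lowEq_of_wt_true w₂
      exact (confined h₁).symm.trans (hlow.trans (confined h₂))

/-- Noninterference: a command well-typed under a low program counter maps
low-equivalent memories to low-equivalent memories. -/
theorem noninterference (Γ : ℕ → Lvl) (C : Cmd) (M₁ M₂ M₁' M₂' : ℕ → ℤ)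
    (hwt : WT Γ false C) (hlow : LowEq Γ M₁ M₂)
    (h₁ : BigStep C M₁ M₁') (h₂ : BigStep C M₂ M₂') :
    LowEq Γ M₁' M₂' :=
  hwt.lowEq_of_bigStep hlow h₁ h₂
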